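/- The greedy set cover algorithm, which repeatedly picks the set covering the maximum number of yet-uncovered elements, returns a cover of size at most (ln n + 1) times the size of a minimum cover, where n is the number of elements in the universe. -/

import Mathlib

/-! If `k` sets cover `U` and `u` elements are still uncovered, one of these `k` sets contains at
least `u / k` of them, so the greedy choice covers at least as many: the number of uncovered
elements satisfies `u (i + 1) ≤ (1 - 1/k) * u i`. Before the last greedy step at least one element
is uncovered, so after `m = length - 1` steps `1 ≤ (1 - 1/k) ^ m * n ≤ exp (-m/k) * n`, that is
`m ≤ k * ln n`, and the greedy cover has at most `k * ln n + 1 ≤ k * (ln n + 1)` sets. -/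

open Finset Real

lemma pow_one_sub_inv_le_exp_neg {k : ℝ} (hk : 1 ≤ k) (m : ℕ) :
    (1 - k⁻¹) ^ m ≤ exp (-(m / k)) :=
  calc (1 - k⁻¹) ^ m ≤ exp (-k⁻¹) ^ m :=
        pow_le_pow_left₀ (sub_nonneg.2 (inv_le_one_of_one_le₀ hk))
          (by linarith [add_one_le_exp (-k⁻¹)]) m
    _ = exp (-(m / k)) := by rw [← exp_nat_mul]; ring_nf

lemma le_mul_log_of_one_le_pow_one_sub_inv_mul {k a : ℝ} {m : ℕ} (hk : 1 ≤ k)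
    (h : 1 ≤ (1 - k⁻¹) ^ m * a) : m ≤ k * log a := by
  have ha : 0 < a := pos_of_mul_pos_right (one_pos.trans_le h)
    (pow_nonneg (sub_nonneg.2 (inv_le_one_of_one_le₀ hk)) m)
  have hexp : 1 ≤ exp (-(m / k)) * a :=
    h.trans (mul_le_mul_of_nonneg_right (pow_one_sub_inv_le_exp_neg hk m) ha.le)
  rw [exp_neg, inv_mul_eq_div, one_le_div (exp_pos _), ← le_log_iff_exp_le ha,
    div_le_iff₀ (by linarith)] at hexp
  linarith

section FiniteCover

variable {α : Type*} [DecidableEq α]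

lemma List.foldr_union_take_add_one (l : List (Finset α)) {i : ℕ} (hi : i < l.length) :
    (l.take (i + 1)).foldr (· ∪ ·) ∅ = (l.take i).foldr (· ∪ ·) ∅ ∪ l[i] := by
  rw [List.take_add_one, List.getElem?_eq_getElem hi]
  induction l.take i <;> simp_all [union_assoc]

lemma List.foldr_union_subset {l : List (Finset α)} {U : Finset α} (h : ∀ A ∈ l, A ⊆ U) :
    l.foldr (· ∪ ·) ∅ ⊆ U := by
  induction l <;> simp_all [union_subset_iff]

lemma Finset.card_sdiff_le_card_mul {U C g : Finset α} {G : Finset (Finset α)}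
    (hG : U ⊆ G.sup id) (hg : ∀ A ∈ G, #(A \ C) ≤ #(g \ C)) :
    #(U \ C) ≤ #G * #(g \ C) :=
  calc #(U \ C) ≤ #(G.biUnion (· \ C)) := card_le_card fun x hx => by
        obtain ⟨A, hA, hxA⟩ := mem_sup.1 (hG (mem_sdiff.1 hx).1)
        exact mem_biUnion.2 ⟨A, hA, mem_sdiff.2 ⟨hxA, (mem_sdiff.1 hx).2⟩⟩
    _ ≤ ∑ A ∈ G, #(A \ C) := card_biUnion_le
    _ ≤ #G * #(g \ C) := by simpa using sum_le_sum hg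

lemma Finset.card_sdiff_union_add_card_sdiff {U C g : Finset α} (hg : g ⊆ U) :
    #(U \ (C ∪ g)) + #(g \ C) = #(U \ C) := by
  rw [← card_sdiff_add_card_eq_card (sdiff_subset_sdiff hg (subset_refl C))]
  congr 2
  ext x
  simp only [mem_sdiff, mem_union]
  tauto

lemma Finset.card_sdiff_union_le {U C g : Finset α} {G : Finset (Finset α)} (hgU : g ⊆ U)
    (hG : U ⊆ G.sup id) (hg : ∀ A ∈ G, #(A \ C) ≤ #(g \ C)) :
    (#(U \ (C ∪ g)) : ℝ) ≤ (1 - (#G : ℝ)⁻¹) * #(U \ C) := by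
  have hcover : (#(U \ C) : ℝ) ≤ #G * #(g \ C) := by exact_mod_cast card_sdiff_le_card_mul hG hg
  have hsplit : (#(U \ (C ∪ g)) : ℝ) + #(g \ C) = #(U \ C) := by
    exact_mod_cast card_sdiff_union_add_card_sdiff hgU
  rcases (Nat.cast_nonneg (α := ℝ) #G).eq_or_lt with hk | hk
  · rw [← hk] at hcover ⊢
    simp only [inv_zero, sub_zero, one_mul]
    linarith
  · have : #(U \ C) / (#G : ℝ) ≤ #(g \ C) := (div_le_iff₀' hk).2 hcover
    rw [sub_mul, one_mul, inv_mul_eq_div]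
    linarith

end FiniteCover

theorem greedy_set_cover_ln_approx_general {α : Type*} [DecidableEq α]
    (U : Finset α) (F : Finset (Finset α))
    (hF : ∀ A ∈ F, A ⊆ U)
    (gs : List (Finset α))
    (hmem : ∀ A ∈ gs, A ∈ F)
    (hnotdone : ∀ i, i < gs.length → (gs.take i).foldr (· ∪ ·) ∅ ≠ U)
    (hgreedy : ∀ i (h : i < gs.length), ∀ A ∈ F,
      (A \ (gs.take i).foldr (· ∪ ·) ∅).card ≤
        ((gs.get ⟨i, h⟩) \ (gs.take i).foldr (· ∪ ·) ∅).card) :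
    ∀ G ⊆ F, G.sup id = U → (gs.length : ℝ) ≤ (Real.log U.card + 1) * G.card := by
  intro G hGF hGcov
  set u : ℕ → ℝ := fun i => #(U \ (gs.take i).foldr (· ∪ ·) ∅)
  rcases hL : gs.length with _ | m
  · rw [Nat.cast_zero]
    positivity
  have hstep : ∀ i < m, u (i + 1) ≤ (1 - (#G : ℝ)⁻¹) * u i := fun i hi => by
    have hi' : i < gs.length := by omega
    simp only [u, gs.foldr_union_take_add_one hi']
    exact card_sdiff_union_le (hF _ (hmem _ (List.getElem_mem hi'))) hGcov.ge
      fun A hA => by simpa using hgreedy i hi' A (hGF hA)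
  have hnonempty : (U \ (gs.take m).foldr (· ∪ ·) ∅).Nonempty :=
    sdiff_nonempty.2 fun hU => hnotdone m (by omega) <|
      (List.foldr_union_subset fun A hA => hF A (hmem A (List.mem_of_mem_take hA))).antisymm hU
  have hum : 1 ≤ u m := Nat.one_le_cast.2 hnonempty.card_pos
  have hG : 1 ≤ (#G : ℝ) := by
    obtain ⟨x, hx⟩ := hnonempty
    obtain ⟨A, hA, -⟩ := mem_sup.1 (hGcov.ge (mem_sdiff.1 hx).1)
    exact_mod_cast card_pos.2 ⟨A, hA⟩
  have hlog := le_mul_log_of_one_le_pow_one_sub_inv_mul hG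
    (hum.trans (le_geom (sub_nonneg.2 (Nat.cast_inv_le_one _)) m hstep))
  simp only [u, List.take_zero, List.foldr_nil, sdiff_empty] at hlog
  push_cast
  linarith

/-- The greedy set cover algorithm (repeatedly picking the set covering
the maximum number of yet-uncovered elements, until the universe `U` is covered)
returns a cover of size at most `(ln n + 1)` times the size of a minimum cover,
where `n = |U| ≥ 1`. The greedy run is encoded by the list `gs` of chosen sets. -/
theorem greedy_set_cover_ln_approx {α : Type*} [DecidableEq α]
    (U : Finset α) (F : Finset (Finset α))
    (hn : 1 ≤ U.card)
    (hF : ∀ A ∈ F, A ⊆ U)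
    (hcover : F.sup id = U)
    (gs : List (Finset α))
    (hmem : ∀ A ∈ gs, A ∈ F)
    (hnotdone : ∀ i, i < gs.length → (gs.take i).foldr (· ∪ ·) ∅ ≠ U)
    (hgreedy : ∀ i (h : i < gs.length), ∀ A ∈ F,
      (A \ (gs.take i).foldr (· ∪ ·) ∅).card ≤
        ((gs.get ⟨i, h⟩) \ (gs.take i).foldr (· ∪ ·) ∅).card)
    (hdone : gs.foldr (· ∪ ·) ∅ = U) :
    ∀ G ⊆ F, G.sup id = U → (gs.length : ℝ) ≤ (Real.log U.card + 1) * G.card :=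
  greedy_set_cover_ln_approx_general U F hF gs hmem hnotdone hgreedy
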